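/- Stability of the numerical scheme (consequence of Theorem 6): With A = circ(G_0, …, G_{N−1}) the circulant matrix built from G_ℓ = (1/2)[erf((x_ℓ + dx/2)/√(4Dτ)) − erf((x_ℓ − dx/2)/√(4Dτ))], x_ℓ = x_0 + ℓ·dx, D, τ, dx > 0, N ≥ 1, one has ‖A u‖₂ ≤ ‖u‖₂ for every u ∈ ℝ^N, i.e. uᵀ(AᵀA − I)u ≤ 0 for all u; hence the discrete energy Σ_i (A u)_i² − Σ_i u_i² is nonpositive at every step of the scheme. -/
import Mathlib


open MeasureTheory intervalIntegral Matrix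

noncomputable section

/-- The error function `erf(z) = (2/√π) ∫_0^z exp(-s²) ds`. -/
def erf (z : ℝ) : ℝ :=
  (2 / Real.sqrt Real.pi) * ∫ s in (0:ℝ)..z, Real.exp (-(s ^ 2))

/-- The grid points `x_ℓ = x₀ + ℓ·dx`. -/
def gridPt (x₀ dx : ℝ) (ℓ : ℕ) : ℝ := x₀ + ℓ * dx

/-- The discrete Green's coefficients
`G_ℓ = (1/2)[erf((x_ℓ + dx/2)/√(4Dτ)) - erf((x_ℓ - dx/2)/√(4Dτ))]`. -/
def Gcoef (D τ x₀ dx : ℝ) (ℓ : ℕ) : ℝ :=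
  (1/2) * (erf ((gridPt x₀ dx ℓ + dx/2) / Real.sqrt (4*D*τ))
    - erf ((gridPt x₀ dx ℓ - dx/2) / Real.sqrt (4*D*τ)))

lemma expsq_integrable : Integrable (fun s : ℝ => Real.exp (-(s ^ 2))) := by
  have := integrable_exp_neg_mul_sq (b := 1) one_pos
  simpa using this

lemma erf_sub_eq (x y : ℝ) :
    erf x - erf y = (2 / Real.sqrt Real.pi) * ∫ s in y..x, Real.exp (-(s ^ 2)) := by
  unfold erf
  rw [← mul_sub]
  congr 1
  rw [intervalIntegral.integral_interval_sub_left
    expsq_integrable.intervalIntegrable expsq_integrable.intervalIntegrable]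

lemma erf_mono : Monotone erf := by
  intro y x h
  have h1 : 0 ≤ erf x - erf y := by
    rw [erf_sub_eq]
    apply mul_nonneg
    · positivity
    · exact intervalIntegral.integral_nonneg h (fun s _ => (Real.exp_pos _).le)
  linarith

lemma erf_zero : erf 0 = 0 := by simp [erf]

lemma erf_le_one (z : ℝ) : erf z ≤ 1 := by
  rcases le_or_gt z 0 with hz | hz
  · have := erf_mono hz
    rw [erf_zero] at this
    linarith
  · have hInt : ∫ s in (0:ℝ)..z, Real.exp (-(s ^ 2)) ≤ Real.sqrt Real.pi / 2 := by
      rw [intervalIntegral.integral_of_le hz.le]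
      have hint : IntegrableOn (fun s : ℝ => Real.exp (-(s ^ 2))) (Set.Ioi 0) :=
        expsq_integrable.integrableOn
      calc ∫ s in Set.Ioc 0 z, Real.exp (-(s ^ 2))
          ≤ ∫ s in Set.Ioi 0, Real.exp (-(s ^ 2)) := by
            apply setIntegral_mono_set hint
            · exact Filter.Eventually.of_forall fun s => (Real.exp_pos _).le
            · exact HasSubset.Subset.eventuallyLE Set.Ioc_subset_Ioi_self
        _ = Real.sqrt Real.pi / 2 := by
            have := integral_gaussian_Ioi 1
            simpa using this
    unfold erf
    have hπ : 0 < Real.sqrt Real.pi := Real.sqrt_pos.mpr Real.pi_pos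
    calc (2 / Real.sqrt Real.pi) * ∫ s in (0:ℝ)..z, Real.exp (-(s ^ 2))
        ≤ (2 / Real.sqrt Real.pi) * (Real.sqrt Real.pi / 2) := by
          apply mul_le_mul_of_nonneg_left hInt (by positivity)
      _ = 1 := by field_simp
lemma erf_neg (z : ℝ) : erf (-z) = - erf z := by
  unfold erf
  have h1 : ∫ s in (0:ℝ)..(-z), Real.exp (-(s ^ 2))
      = - ∫ s in (0:ℝ)..z, Real.exp (-(s ^ 2)) := by
    rw [intervalIntegral.integral_symm]
    congr 1
    have := intervalIntegral.integral_comp_neg (a := (0:ℝ)) (b := z)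
      (fun s => Real.exp (-(s ^ 2)))
    simp only [neg_zero] at this
    rw [← this]
    congr 1
    ext s
    ring_nf
  rw [h1]; ring

lemma neg_one_le_erf (z : ℝ) : -1 ≤ erf z := by
  have := erf_le_one (-z)
  rw [erf_neg] at this
  linarith

lemma Gcoef_nonneg {D τ : ℝ} (x₀ : ℝ) {dx : ℝ} (hD : 0 < D) (hτ : 0 < τ) (hdx : 0 < dx)
    (ℓ : ℕ) : 0 ≤ Gcoef D τ x₀ dx ℓ := by
  have hc : 0 < Real.sqrt (4*D*τ) := Real.sqrt_pos.mpr (by positivity)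
  have h : (gridPt x₀ dx ℓ - dx/2) / Real.sqrt (4*D*τ)
      ≤ (gridPt x₀ dx ℓ + dx/2) / Real.sqrt (4*D*τ) := by
    gcongr
    linarith
  have := erf_mono h
  unfold Gcoef
  linarith

lemma Gcoef_sum_le_one {D τ : ℝ} (x₀ : ℝ) {dx : ℝ} (hD : 0 < D) (hτ : 0 < τ) (hdx : 0 < dx)
    (N : ℕ) : ∑ ℓ ∈ Finset.range N, Gcoef D τ x₀ dx ℓ ≤ 1 := by
  set c := Real.sqrt (4*D*τ)
  set f : ℕ → ℝ := fun n => erf ((x₀ + n * dx - dx/2) / c) with hf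
  have hG : ∀ ℓ : ℕ, Gcoef D τ x₀ dx ℓ = (1/2) * (f (ℓ+1) - f ℓ) := by
    intro ℓ
    unfold Gcoef gridPt
    rw [hf]
    congr 3
    push_cast
    ring
  calc ∑ ℓ ∈ Finset.range N, Gcoef D τ x₀ dx ℓ
      = (1/2) * ∑ ℓ ∈ Finset.range N, (f (ℓ+1) - f ℓ) := by
        rw [Finset.mul_sum]; exact Finset.sum_congr rfl fun ℓ _ => hG ℓ
    _ = (1/2) * (f N - f 0) := by rw [Finset.sum_range_sub]
    _ ≤ 1 := by
        have h1 := erf_le_one ((x₀ + (N:ℝ) * dx - dx/2) / c)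
        have h2 := neg_one_le_erf ((x₀ + (0:ℕ) * dx - dx/2) / c)
        simp only [hf]
        push_cast at h2 ⊢
        linarith

/-- Stability of the numerical scheme (consequence of Theorem 6): with
`A = circ(G_0, …, G_{N-1})` the circulant matrix of the discrete Green's coefficients,
`‖A u‖₂ ≤ ‖u‖₂` for every `u ∈ ℝ^N`, i.e. `uᵀ(AᵀA - I)u ≤ 0` for all `u`; hence the
discrete energy difference `Σ_i (A u)_i² - Σ_i u_i²` is nonpositive at every step. -/
theorem scheme_stability (D τ dx x₀ : ℝ) (hD : 0 < D) (hτ : 0 < τ) (hdx : 0 < dx)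
    (N : ℕ) (hN : 1 ≤ N) :
    ∀ u : Fin N → ℝ,
      (∑ i : Fin N, ((Matrix.circulant (fun ℓ : Fin N => Gcoef D τ x₀ dx ℓ.val)).mulVec u i) ^ 2)
          ≤ (∑ i : Fin N, (u i) ^ 2) ∧
      u ⬝ᵥ (((Matrix.circulant (fun ℓ : Fin N => Gcoef D τ x₀ dx ℓ.val))ᵀ *
          Matrix.circulant (fun ℓ : Fin N => Gcoef D τ x₀ dx ℓ.val) - 1).mulVec u) ≤ 0 ∧
      (∑ i : Fin N, ((Matrix.circulant (fun ℓ : Fin N => Gcoef D τ x₀ dx ℓ.val)).mulVec u i) ^ 2)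
          - (∑ i : Fin N, (u i) ^ 2) ≤ 0 := by
  haveI : NeZero N := ⟨Nat.one_le_iff_ne_zero.mp hN⟩
  intro u
  set v : Fin N → ℝ := fun ℓ => Gcoef D τ x₀ dx ℓ.val with hv
  set A : Matrix (Fin N) (Fin N) ℝ := Matrix.circulant v with hA
  set S : ℝ := ∑ ℓ ∈ Finset.range N, Gcoef D τ x₀ dx ℓ with hS
  have hv0 : ∀ ℓ, 0 ≤ v ℓ := fun ℓ => Gcoef_nonneg x₀ hD hτ hdx _
  have hA0 : ∀ i j, 0 ≤ A i j := fun i j => hv0 _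
  have hvsum : ∑ ℓ : Fin N, v ℓ = S := by
    rw [hS, hv, Fin.sum_univ_eq_sum_range]
  have hrow : ∀ i, ∑ j, A i j = S := by
    intro i
    rw [← hvsum, ← Equiv.sum_comp (Equiv.subLeft i) v]
    rfl
  have hcol : ∀ j, ∑ i, A i j = S := by
    intro j
    rw [← hvsum, ← Equiv.sum_comp (Equiv.subRight j) v]
    rfl
  have hS0 : 0 ≤ S := by
    rw [hS]
    exact Finset.sum_nonneg fun ℓ _ => Gcoef_nonneg x₀ hD hτ hdx ℓ
  have hS1 : S ≤ 1 := Gcoef_sum_le_one x₀ hD hτ hdx N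
  have key : (∑ i : Fin N, (A.mulVec u i) ^ 2) ≤ ∑ i : Fin N, (u i) ^ 2 := by
    have step1 : ∀ i : Fin N, (A.mulVec u i) ^ 2 ≤ S * ∑ j, A i j * (u j) ^ 2 := by
      intro i
      have hcs : (∑ j, Real.sqrt (A i j) * (Real.sqrt (A i j) * u j)) ^ 2
          ≤ (∑ j, Real.sqrt (A i j) ^ 2) * (∑ j, (Real.sqrt (A i j) * u j) ^ 2) :=
        Finset.sum_mul_sq_le_sq_mul_sq _ _ _
      have he1 : ∀ j, Real.sqrt (A i j) * (Real.sqrt (A i j) * u j) = A i j * u j := by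
        intro j
        rw [← mul_assoc, Real.mul_self_sqrt (hA0 i j)]
      have he2 : ∀ j, Real.sqrt (A i j) ^ 2 = A i j := fun j => Real.sq_sqrt (hA0 i j)
      have he3 : ∀ j, (Real.sqrt (A i j) * u j) ^ 2 = A i j * (u j) ^ 2 := by
        intro j
        rw [mul_pow, he2]
      simp only [he1, he2, he3] at hcs
      calc (A.mulVec u i) ^ 2 = (∑ j, A i j * u j) ^ 2 := rfl
        _ ≤ (∑ j, A i j) * (∑ j, A i j * (u j) ^ 2) := hcs
        _ = S * ∑ j, A i j * (u j) ^ 2 := by rw [hrow]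
    calc ∑ i : Fin N, (A.mulVec u i) ^ 2
        ≤ ∑ i : Fin N, S * ∑ j, A i j * (u j) ^ 2 :=
          Finset.sum_le_sum fun i _ => step1 i
      _ = S * ∑ j, (∑ i, A i j) * (u j) ^ 2 := by
          rw [← Finset.mul_sum, Finset.sum_comm]
          congr 1
          exact Finset.sum_congr rfl fun j _ => by rw [Finset.sum_mul]
      _ = S * S * ∑ j, (u j) ^ 2 := by
          simp only [hcol]
          rw [← Finset.mul_sum, mul_assoc]
      _ ≤ 1 * ∑ j, (u j) ^ 2 := by
          apply mul_le_mul_of_nonneg_right _ (Finset.sum_nonneg fun j _ => sq_nonneg _)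
          nlinarith
      _ = ∑ j, (u j) ^ 2 := one_mul _
  refine ⟨key, ?_, sub_nonpos.mpr key⟩
  have heq : u ⬝ᵥ ((Aᵀ * A - 1).mulVec u)
      = (∑ i : Fin N, (A.mulVec u i) ^ 2) - ∑ i : Fin N, (u i) ^ 2 := by
    rw [Matrix.sub_mulVec, dotProduct_sub, Matrix.one_mulVec,
      ← Matrix.mulVec_mulVec, Matrix.dotProduct_mulVec, Matrix.vecMul_transpose]
    simp [dotProduct, sq]
  rw [heq]
  linarith
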